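/- arXiv:2102.00926 — 8 statements merged into one kernel-verified Lean document; each statement's English description precedes it below -/
import Mathlib

section
/- Let N, K, M be positive natural numbers and let Z : Fin N → Finset (Fin K) be an assignment such that (Z n).card ≤ M for every server n and every dataset k ∈ Fin K is assigned to at least one server (i.e., for every k there exists n with k ∈ Z n). Then there exists an injective function s : Fin ⌈K/M⌉ → Fin N (where ⌈K/M⌉ = (K + M - 1)/M) such that the ordered tuple (s 0, s 1, …) satisfies the novelty property: for every i, the set Z (s i) \ (⋃_{j < i} Z (s j)) is nonempty. -/
/-!
Greedy construction: `t` servers cover at most `t * M` datasets, so while `t * M < K` some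
dataset is still uncovered, and any server holding it extends the chain. Each server of a novelty chain brings a dataset held by no
earlier server, so the servers of a chain are automatically distinct.
-/

open Finset

section NoveltyChain

variable {ι α : Type*} [DecidableEq α]

/-- Condition (15) of the paper for the ordered tuple `s 0, s 1, …, s (t - 1)`. -/
def IsNoveltyChain {t : ℕ} (Z : ι → Finset α) (s : Fin t → ι) : Prop :=
  ∀ i, (Z (s i) \ (univ.filter (· < i)).biUnion (fun j => Z (s j))).Nonempty

theorem isNoveltyChain_iff {t : ℕ} {Z : ι → Finset α} {s : Fin t → ι} :
    IsNoveltyChain Z s ↔ ∀ i, ∃ a ∈ Z (s i), ∀ j < i, a ∉ Z (s j) := by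
  simp [IsNoveltyChain, Finset.Nonempty]

theorem IsNoveltyChain.ne_of_lt {t : ℕ} {Z : ι → Finset α} {s : Fin t → ι}
    (hs : IsNoveltyChain Z s) {i j : Fin t} (hji : j < i) : s j ≠ s i := by
  obtain ⟨a, hai, hnew⟩ := isNoveltyChain_iff.mp hs i
  exact fun hsji => hnew j hji (hsji ▸ hai)

theorem IsNoveltyChain.injective {t : ℕ} {Z : ι → Finset α} {s : Fin t → ι}
    (hs : IsNoveltyChain Z s) : Function.Injective s := by
  intro i j hij
  by_contra hne
  rcases lt_or_gt_of_ne hne with hlt | hlt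
  · exact hs.ne_of_lt hlt hij
  · exact hs.ne_of_lt hlt hij.symm

theorem IsNoveltyChain.snoc {t : ℕ} {Z : ι → Finset α} {s : Fin t → ι}
    (hs : IsNoveltyChain Z s) {n : ι} {a : α} (han : a ∈ Z n) (hnew : ∀ j, a ∉ Z (s j)) :
    IsNoveltyChain Z (Fin.snoc s n : Fin (t + 1) → ι) := by
  rw [isNoveltyChain_iff] at hs ⊢
  intro i
  induction i using Fin.lastCases with
  | last =>
    refine ⟨a, by simpa using han, fun j hj => ?_⟩
    obtain ⟨j, rfl⟩ := Fin.exists_castSucc_eq.mpr hj.ne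
    simpa using hnew j
  | cast i =>
    obtain ⟨b, hbi, hbnew⟩ := hs i
    refine ⟨b, by simpa using hbi, fun j hj => ?_⟩
    obtain ⟨j, rfl⟩ := Fin.exists_castSucc_eq.mpr (hj.trans (Fin.castSucc_lt_last i)).ne
    simpa using hbnew j (Fin.castSucc_lt_castSucc_iff.mp hj)

variable [Fintype α]

theorem exists_isNoveltyChain_of_cover {M : ℕ} (Z : ι → Finset α)
    (hZcard : ∀ n, #(Z n) ≤ M) (hcover : ∀ a, ∃ n, a ∈ Z n) :
    ∀ t : ℕ, t * M < Fintype.card α + M → ∃ s : Fin t → ι, IsNoveltyChain Z s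
  | 0, _ => ⟨Fin.elim0, fun i => i.elim0⟩
  | t + 1, ht => by
    have htM : t * M < Fintype.card α := by rw [add_mul, one_mul] at ht; omega
    obtain ⟨s, hs⟩ := exists_isNoveltyChain_of_cover Z hZcard hcover t (by omega)
    have hcovered : #(univ.biUnion fun j => Z (s j)) < Fintype.card α :=
      (card_biUnion_le_card_mul _ _ M fun j _ => hZcard (s j)).trans_lt (by simpa using htM)
    obtain ⟨a, -, ha⟩ := exists_mem_notMem_of_card_lt_card (t := univ) (by simpa using hcovered)
    obtain ⟨n, han⟩ := hcover a
    exact ⟨_, hs.snoc han fun j haj => ha (mem_biUnion.mpr ⟨j, mem_univ j, haj⟩)⟩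

end NoveltyChain

theorem exists_novelty_chain_of_cover_general (N K M : ℕ) (hM : 0 < M)
    (Z : Fin N → Finset (Fin K))
    (hZcard : ∀ n, (Z n).card ≤ M)
    (hcover : ∀ k : Fin K, ∃ n, k ∈ Z n) :
    ∃ s : Fin ((K + M - 1) / M) → Fin N, Function.Injective s ∧
      ∀ i, (Z (s i) \
        (Finset.univ.filter (fun j => j < i)).biUnion (fun j => Z (s j))).Nonempty := by
  have hlen : (K + M - 1) / M * M < Fintype.card (Fin K) + M := by
    have := Nat.div_mul_le_self (K + M - 1) M
    rw [Fintype.card_fin]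
    omega
  obtain ⟨s, hs⟩ := exists_isNoveltyChain_of_cover Z hZcard hcover _ hlen
  exact ⟨s, hs.injective, hs⟩

/-- Given an assignment `Z` of at most `M` datasets per server that covers all
`K` datasets, there is an ordered tuple of `⌈K/M⌉` distinct servers satisfying the novelty
property. -/
theorem exists_novelty_chain_of_cover (N K M : ℕ) (hN : 0 < N) (hK : 0 < K) (hM : 0 < M)
    (Z : Fin N → Finset (Fin K))
    (hZcard : ∀ n, (Z n).card ≤ M)
    (hcover : ∀ k : Fin K, ∃ n, k ∈ Z n) :
    ∃ s : Fin ((K + M - 1) / M) → Fin N, Function.Injective s ∧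
      ∀ i, (Z (s i) \
        (Finset.univ.filter (fun j => j < i)).biUnion (fun j => Z (s j))).Nonempty :=
  exists_novelty_chain_of_cover_general N K M hM Z hZcard hcover
end

section
/- Let N and N_r be natural numbers with 1 ≤ N_r ≤ N. For each natural number m, let Z' m := (Finset.range (N − N_r + 1)).image (fun j => ((m + j : ℕ) : ZMod N)) be the set assigned to server m under the cyclic assignment. Then for all natural numbers n, m with n < m < N_r, one has (n : ZMod N) ∈ Z' n and (n : ZMod N) ∉ Z' m. Consequently, the ordered tuple of servers (N_r − 1, N_r − 2, …, 1, 0) satisfies the novelty property: for each i, server N_r − 1 − i has the group with index N_r − 1 − i, which is not assigned to any of the servers N_r − 1, …, N_r − i. -/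
/-!
A window of fewer than `N` consecutive naturals lying strictly above `n` cannot contain a number
congruent to `n` modulo `N`. Server `m` holds the window `[m, m + N - N_r]`, which for `n < m < N_r`
lies in `(n, n + N)`.
-/

namespace ZMod

theorem natCast_ne_natCast_of_lt_of_lt_add {N n a : ℕ} (hna : n < a) (haN : a < n + N) :
    (a : ZMod N) ≠ n := fun h =>
  hna.ne' <| ((natCast_eq_natCast_iff a n N).mp h).eq_of_abs_lt <| by
    rw [abs_sub_lt_iff]; omega

def cyclicWindow (N w m : ℕ) : Finset (ZMod N) :=
  (Finset.range w).image fun j => ((m + j : ℕ) : ZMod N)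

theorem natCast_mem_cyclicWindow {N w : ℕ} (m : ℕ) (hw : 0 < w) :
    (m : ZMod N) ∈ cyclicWindow N w m :=
  Finset.mem_image.mpr ⟨0, Finset.mem_range.mpr hw, by simp⟩

theorem natCast_notMem_cyclicWindow {N w n m : ℕ} (hnm : n < m) (hwN : m + w ≤ n + N) :
    (n : ZMod N) ∉ cyclicWindow N w m := by
  rintro hn
  obtain ⟨j, hj, hjn⟩ := Finset.mem_image.mp hn
  exact natCast_ne_natCast_of_lt_of_lt_add (by omega) (by rw [Finset.mem_range] at hj; omega) hjn

end ZMod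

theorem cyclic_assignment_novelty_general (N Nr : ℕ) (h2 : Nr ≤ N)
    (Z' : ℕ → Finset (ZMod N))
    (hZ' : ∀ m : ℕ, Z' m = (Finset.range (N - Nr + 1)).image (fun j => ((m + j : ℕ) : ZMod N))) :
    ∀ n m : ℕ, n < m → m < Nr →
      (n : ZMod N) ∈ Z' n ∧ (n : ZMod N) ∉ Z' m := by
  intro n m hnm hmNr
  have hZ'_window (k : ℕ) : Z' k = ZMod.cyclicWindow N (N - Nr + 1) k := hZ' k
  rw [hZ'_window, hZ'_window]
  exact ⟨ZMod.natCast_mem_cyclicWindow n (Nat.succ_pos _),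
    ZMod.natCast_notMem_cyclicWindow hnm (by omega)⟩

/-- Under the cyclic assignment with window size `N - N_r + 1`, the group with
index `n` is assigned to server `n` but not to any server `m` with `n < m < N_r`. -/
theorem cyclic_assignment_novelty (N Nr : ℕ) (h1 : 1 ≤ Nr) (h2 : Nr ≤ N)
    (Z' : ℕ → Finset (ZMod N))
    (hZ' : ∀ m : ℕ, Z' m = (Finset.range (N - Nr + 1)).image (fun j => ((m + j : ℕ) : ZMod N))) :
    ∀ n m : ℕ, n < m → m < Nr →
      (n : ZMod N) ∈ Z' n ∧ (n : ZMod N) ∉ Z' m :=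
  cyclic_assignment_novelty_general N Nr h2 Z' hZ'
end

section
/- Let N, K, M, M' be natural numbers with K ≥ 1, 1 ≤ M', M' < N, K < 2 * M and M < K. Let Z : Fin N → Finset (Fin K) be an assignment such that (Z n).card = M for every server n and every dataset k ∈ Fin K is assigned to exactly M' servers (i.e., (Finset.univ.filter (fun n => k ∈ Z n)).card = M' for every k). Then there exist three pairwise distinct servers n₁, n₂, n₃ ∈ Fin N such that the finsets Z n₁, Z n₂, Z n₃ are pairwise distinct. -/
/-! If the assigned sets took at most two values `Z a`, `Z b`, then, as `|Z a| + |Z b| = 2M > K`,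
some dataset would lie in both, hence be assigned to all `N > M'` servers. -/

open Finset

theorem Function.exists_three_pairwise_ne_of_forall_exists_ne_ne {ι β : Type*} [Nonempty ι]
    (f : ι → β) (h : ∀ a b, ∃ i, f i ≠ f a ∧ f i ≠ f b) :
    ∃ i j k, i ≠ j ∧ i ≠ k ∧ j ≠ k ∧ f i ≠ f j ∧ f i ≠ f k ∧ f j ≠ f k := by
  obtain ⟨i⟩ := ‹Nonempty ι›
  obtain ⟨j, hji, -⟩ := h i i
  obtain ⟨k, hki, hkj⟩ := h i j
  exact ⟨i, j, k, fun hij => hji (hij ▸ rfl), fun hik => hki (hik ▸ rfl),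
    fun hjk => hkj (hjk ▸ rfl), hji.symm, hki.symm, hkj.symm⟩

theorem Finset.exists_mem_forall_of_forall_eq_or_eq {ι α : Type*} [Fintype α] [DecidableEq α]
    (Z : ι → Finset α) {a b : ι} (hab : Fintype.card α < #(Z a) + #(Z b))
    (h : ∀ n, Z n = Z a ∨ Z n = Z b) : ∃ x, ∀ n, x ∈ Z n := by
  obtain ⟨x, hx⟩ := inter_nonempty_of_card_lt_card_add_card (subset_univ (Z a))
    (subset_univ (Z b)) (by rwa [card_univ])
  rw [mem_inter] at hx
  exact ⟨x, fun n => (h n).elim (· ▸ hx.1) (· ▸ hx.2)⟩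

theorem exists_three_servers_distinct_sets_general (N K M M' : ℕ)
    (hM'N : M' < N) (hKM : K < 2 * M)
    (Z : Fin N → Finset (Fin K))
    (hZcard : ∀ n, (Z n).card = M)
    (hreg : ∀ k : Fin K, (Finset.univ.filter (fun n => k ∈ Z n)).card = M') :
    ∃ n₁ n₂ n₃ : Fin N, n₁ ≠ n₂ ∧ n₁ ≠ n₃ ∧ n₂ ≠ n₃ ∧
      Z n₁ ≠ Z n₂ ∧ Z n₁ ≠ Z n₃ ∧ Z n₂ ≠ Z n₃ := by
  have : Nonempty (Fin N) := ⟨⟨0, by omega⟩⟩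
  refine Function.exists_three_pairwise_ne_of_forall_exists_ne_ne Z fun a b => ?_
  by_contra! htwo
  obtain ⟨k, hk⟩ := exists_mem_forall_of_forall_eq_or_eq Z
    (by rw [Fintype.card_fin, hZcard, hZcard]; omega) (fun n => or_iff_not_imp_left.2 (htwo n))
  have hall : (univ.filter fun n => k ∈ Z n).card = N := by
    rw [filter_true_of_mem fun n _ => hk n, card_univ, Fintype.card_fin]
  exact hM'N.ne (hreg k ▸ hall)

/-- In a biregular assignment where each server obtains exactly `M` datasets,
`K/2 < M < K`, and each dataset is assigned to exactly `M'` servers with `M' < N`, there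
exist three pairwise distinct servers with pairwise distinct sets of assigned datasets. -/
theorem exists_three_servers_distinct_sets (N K M M' : ℕ) (hK : 1 ≤ K)
    (hM'1 : 1 ≤ M') (hM'N : M' < N) (hKM : K < 2 * M) (hMK : M < K)
    (Z : Fin N → Finset (Fin K))
    (hZcard : ∀ n, (Z n).card = M)
    (hreg : ∀ k : Fin K, (Finset.univ.filter (fun n => k ∈ Z n)).card = M') :
    ∃ n₁ n₂ n₃ : Fin N, n₁ ≠ n₂ ∧ n₁ ≠ n₃ ∧ n₂ ≠ n₃ ∧
      Z n₁ ≠ Z n₂ ∧ Z n₁ ≠ Z n₃ ∧ Z n₂ ≠ Z n₃ :=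
  exists_three_servers_distinct_sets_general N K M M' hM'N hKM Z hZcard hreg
end

section
/- Let N, K, M, M' be natural numbers with K ≥ 1, let g := Nat.gcd N M' and a := M' / g, and let b be a natural number. Assume a ≥ 3, N = (2 * a − 1 + a * b) * g, and N * M = K * M'. Let Z : Fin N → Finset (Fin K) be an assignment such that (Z n).card = M for every server n and every dataset k ∈ Fin K is assigned to exactly M' servers. Then there exists an injective function s : Fin (b + 3) → Fin N such that for every i, the set Z (s i) \ (⋃_{j < i} Z (s j)) is nonempty; i.e., there is an ordered tuple of b + 3 distinct servers satisfying the novelty property. -/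
/-!
Call a set `W` of datasets a clump if every server holding some dataset of `W` holds all of `W`.
If no novelty chain has `b + 3` servers, every chain of `b + 2` servers covers all `K` datasets,
and counting shows that two of its members share at most `(b + 2)M - K` datasets. The datasets
missed by a chain of `b + 1` servers then form a clump (any server holding one of them prolongs
the chain to a covering one) with more than `(b + 2)M - K` elements, as `a ≥ 3` forces
`(2b + 3)M < 2K`. Running this on chains through one holder of each clump found so far yields new
clumps whose holders are disjoint from the earlier ones: a common holder would share an old clump
with that clump's representative inside a covering chain. So `b + 2` clumps need `(b + 2)M'`
servers, while `N = (b + 2)M' - gcd(N, M')`.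
-/

open Finset

namespace Novelty

variable {ι α : Type*}

def IsClump (Z : ι → Finset α) (W : Finset α) : Prop :=
  W.Nonempty ∧ ∀ i, ¬Disjoint (Z i) W → W ⊆ Z i

theorem IsClump.exists_subset {Z : ι → Finset α} {W : Finset α} (hW : IsClump Z W)
    (hcov : ∀ k, ∃ i, k ∈ Z i) : ∃ i, W ⊆ Z i := by
  obtain ⟨k, hk⟩ := hW.1
  obtain ⟨i, hi⟩ := hcov k
  exact ⟨i, hW.2 i (not_disjoint_iff.2 ⟨k, hi, hk⟩)⟩

variable [DecidableEq α]

def holders [Fintype ι] (Z : ι → Finset α) (W : Finset α) : Finset ι :=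
  univ.filter fun i => W ⊆ Z i

theorem IsClump.le_card_holders [Fintype ι] {Z : ι → Finset α} {M' : ℕ}
    (hreg : ∀ k, M' ≤ #(univ.filter (k ∈ Z ·))) {W : Finset α} (hW : IsClump Z W) :
    M' ≤ #(holders Z W) := by
  obtain ⟨k, hk⟩ := hW.1
  refine (hreg k).trans (card_le_card fun i hi => ?_)
  exact mem_filter.2 ⟨mem_univ i, hW.2 i (not_disjoint_iff.2 ⟨k, (mem_filter.1 hi).2, hk⟩)⟩

theorem notMem_of_not_subset_biUnion {Z : ι → Finset α} {S : Finset ι} {x : ι}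
    (hx : ¬Z x ⊆ S.biUnion Z) : x ∉ S :=
  fun h => hx (subset_biUnion_of_mem Z h)

theorem injective_of_forall_nonempty_sdiff {Z : ι → Finset α} {n : ℕ} {s : Fin n → ι}
    (hs : ∀ i, (Z (s i) \ (univ.filter (· < i)).biUnion (fun j => Z (s j))).Nonempty) :
    Function.Injective s := by
  intro i j hij
  by_contra hne
  wlog hlt : j < i generalizing i j
  · exact this hij.symm (Ne.symm hne) (lt_of_le_of_ne (not_lt.1 hlt) hne)
  obtain ⟨k, hk⟩ := hs i
  rw [mem_sdiff] at hk
  exact hk.2 (mem_biUnion.2 ⟨j, by simpa using hlt, hij ▸ hk.1⟩)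

theorem card_add_card_le_of_biUnion_eq_univ [Fintype α] {Z : ι → Finset α} {M : ℕ}
    (hZ : ∀ i, #(Z i) ≤ M) {S : Finset ι} (hU : S.biUnion Z = univ) {x y : ι} (hx : x ∈ S)
    (hy : y ∈ S) (hxy : x ≠ y) {W : Finset α} (hWx : W ⊆ Z x) (hWy : W ⊆ Z y) :
    Fintype.card α + #W ≤ #S * M := by
  classical
  set B := (S.erase x).biUnion Z
  have hUB : Z x ∪ B = univ := by rw [← hU, ← biUnion_insert, insert_erase hx]
  have hWB : W ⊆ Z x ∩ B :=
    subset_inter hWx (hWy.trans (subset_biUnion_of_mem Z (mem_erase.2 ⟨hxy.symm, hy⟩)))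
  calc Fintype.card α + #W ≤ #(Z x ∪ B) + #(Z x ∩ B) := by
        rw [hUB, card_univ]; exact Nat.add_le_add_left (card_le_card hWB) _
    _ = #(Z x) + #B := card_union_add_card_inter _ _
    _ ≤ M + #(S.erase x) * M :=
        Nat.add_le_add (hZ x) (card_biUnion_le_card_mul _ _ _ fun i _ => hZ i)
    _ = #S * M := by rw [← card_erase_add_one hx]; ring

variable [DecidableEq ι]

inductive IsNoveltyChain (Z : ι → Finset α) : Finset ι → Prop
  | empty : IsNoveltyChain Z ∅
  | cons {S : Finset ι} {x : ι} :
      IsNoveltyChain Z S → ¬Z x ⊆ S.biUnion Z → IsNoveltyChain Z (insert x S)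

variable {Z : ι → Finset α}

theorem IsNoveltyChain.exists_seq {S : Finset ι} (hS : IsNoveltyChain Z S) {n : ℕ}
    (hn : #S = n) : ∃ s : Fin n → ι, (∀ i, s i ∈ S) ∧
      ∀ i, (Z (s i) \ (univ.filter (· < i)).biUnion (fun j => Z (s j))).Nonempty := by
  induction hS generalizing n with
  | empty => rw [card_empty] at hn; subst hn; exact ⟨Fin.elim0, (·.elim0), (·.elim0)⟩
  | @cons S x _ hx ih =>
    rw [card_insert_of_notMem (notMem_of_not_subset_biUnion hx)] at hn
    subst hn
    obtain ⟨s, hsS, hs⟩ := ih rfl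
    refine ⟨Fin.snoc s x, Fin.lastCases (by simp) (fun i => by simp [hsS]), ?_⟩
    refine Fin.lastCases ?_ (fun i => ?_)
    · obtain ⟨k, hkx, hkS⟩ := not_subset.1 hx
      refine ⟨k, mem_sdiff.2 ⟨by simpa using hkx, fun hk => hkS ?_⟩⟩
      obtain ⟨j, hj, hkj⟩ := mem_biUnion.1 hk
      obtain ⟨j, rfl⟩ := Fin.exists_castSucc_eq.2 (Fin.ne_last_of_lt (mem_filter.1 hj).2)
      exact mem_biUnion.2 ⟨s j, hsS j, by simpa using hkj⟩
    · refine (hs i).mono (sdiff_subset_sdiff (by simp) fun k hk => ?_)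
      obtain ⟨j, hj, hkj⟩ := mem_biUnion.1 hk
      have hji := (mem_filter.1 hj).2
      obtain ⟨j, rfl⟩ := Fin.exists_castSucc_eq.2 (Fin.ne_last_of_lt hji)
      exact mem_biUnion.2 ⟨j, by simpa using hji, by simpa using hkj⟩

theorem IsNoveltyChain.of_forall_not_subset_biUnion_erase {T : Finset ι}
    (hT : ∀ t ∈ T, ¬Z t ⊆ (T.erase t).biUnion Z) : IsNoveltyChain Z T := by
  induction T using Finset.induction_on with
  | empty => exact .empty
  | insert x T hxT ih =>
    refine .cons (ih fun t ht hsub => hT t (mem_insert_of_mem ht) (hsub.trans ?_)) ?_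
    · exact biUnion_subset_biUnion_of_subset_left Z (erase_subset_erase t (subset_insert x T))
    · simpa [erase_insert hxT] using hT x (mem_insert_self x T)

theorem isNoveltyChain_image_of_pairwiseDisjoint [Fintype ι] {𝒲 : Finset (Finset α)}
    (hW : ∀ W ∈ 𝒲, IsClump Z W) (hdisj : (𝒲 : Set (Finset α)).PairwiseDisjoint (holders Z))
    {t : Finset α → ι} (ht : ∀ W ∈ 𝒲, W ⊆ Z (t W)) : IsNoveltyChain Z (𝒲.image t) := by
  refine .of_forall_not_subset_biUnion_erase fun _ hu hsub => ?_
  obtain ⟨W, hW𝒲, rfl⟩ := mem_image.1 hu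
  obtain ⟨k, hk⟩ := (hW W hW𝒲).1
  obtain ⟨_, hu', hku⟩ := mem_biUnion.1 (hsub (ht W hW𝒲 hk))
  obtain ⟨hne, hu'⟩ := mem_erase.1 hu'
  obtain ⟨V, hV𝒲, rfl⟩ := mem_image.1 hu'
  have hVW : V ≠ W := by rintro rfl; exact hne rfl
  have hmem : t V ∈ holders Z W :=
    mem_filter.2 ⟨mem_univ _, (hW W hW𝒲).2 _ (not_disjoint_iff.2 ⟨k, hku, hk⟩)⟩
  exact disjoint_left.1 (hdisj hV𝒲 hW𝒲 hVW) (mem_filter.2 ⟨mem_univ _, ht V hV𝒲⟩) hmem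

variable [Fintype α]

theorem IsNoveltyChain.exists_insert (hcov : ∀ k, ∃ i, k ∈ Z i) {S : Finset ι}
    (hS : IsNoveltyChain Z S) (hU : S.biUnion Z ≠ univ) :
    ∃ x ∉ S, IsNoveltyChain Z (insert x S) := by
  obtain ⟨k, hk⟩ : ∃ k, k ∉ S.biUnion Z := by simpa [eq_univ_iff_forall] using hU
  obtain ⟨x, hx⟩ := hcov k
  have hxU : ¬Z x ⊆ S.biUnion Z := fun h => hk (h hx)
  exact ⟨x, notMem_of_not_subset_biUnion hxU, hS.cons hxU⟩

theorem IsNoveltyChain.exists_superset_card_eq (hcov : ∀ k, ∃ i, k ∈ Z i) {M n : ℕ}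
    (hZ : ∀ i, #(Z i) ≤ M) (hn : n * M < Fintype.card α) {S : Finset ι}
    (hS : IsNoveltyChain Z S) (hSn : #S ≤ n + 1) :
    ∃ T, S ⊆ T ∧ IsNoveltyChain Z T ∧ #T = n + 1 := by
  obtain ⟨d, hd⟩ : ∃ d, #S + d = n + 1 := ⟨_, Nat.add_sub_cancel' hSn⟩
  clear hSn
  induction d generalizing S with
  | zero => exact ⟨S, subset_rfl, hS, hd⟩
  | succ d ih =>
    have hU : S.biUnion Z ≠ univ := by
      intro hU
      have hle := card_biUnion_le_card_mul S Z M fun i _ => hZ i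
      rw [hU, card_univ] at hle
      have : #S * M ≤ n * M := Nat.mul_le_mul_right M (by omega)
      omega
    obtain ⟨x, hxS, hx⟩ := hS.exists_insert hcov hU
    obtain ⟨T, hST, hT, hTn⟩ := ih hx (by rw [card_insert_of_notMem hxS]; omega)
    exact ⟨T, (subset_insert x S).trans hST, hT, hTn⟩

theorem IsNoveltyChain.isClump_compl_biUnion {S : Finset ι} (hS : IsNoveltyChain Z S)
    (hcover : ∀ T, IsNoveltyChain Z T → #T = #S + 1 → T.biUnion Z = univ)
    (hne : (S.biUnion Z)ᶜ.Nonempty) : IsClump Z (S.biUnion Z)ᶜ := by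
  refine ⟨hne, fun i hi k hk => ?_⟩
  have hiS : ¬Z i ⊆ S.biUnion Z := fun h => hi (disjoint_compl_right.mono_left h)
  have hU := hcover _ (hS.cons hiS) (card_insert_of_notMem (notMem_of_not_subset_biUnion hiS))
  rw [biUnion_insert] at hU
  exact (mem_union.1 (hU ▸ mem_univ k)).resolve_right (mem_compl.1 hk)

variable [Fintype ι] {M n : ℕ}

theorem exists_isClump_disjoint_holders (hcov : ∀ k, ∃ i, k ∈ Z i) (hZ : ∀ i, #(Z i) ≤ M)
    (hM : (2 * n + 3) * M < 2 * Fintype.card α)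
    (hcover : ∀ S, IsNoveltyChain Z S → #S = n + 2 → S.biUnion Z = univ)
    {𝒲 : Finset (Finset α)} (h𝒲 : #𝒲 ≤ n + 1)
    (hW : ∀ W ∈ 𝒲, IsClump Z W ∧ (n + 2) * M < Fintype.card α + #W)
    (hdisj : (𝒲 : Set (Finset α)).PairwiseDisjoint (holders Z)) :
    ∃ W', IsClump Z W' ∧ (n + 2) * M < Fintype.card α + #W' ∧
      ∀ W ∈ 𝒲, Disjoint (holders Z W') (holders Z W) := by
  have : Nonempty ι := by
    obtain ⟨k⟩ : Nonempty α := Fintype.card_pos_iff.1 (by omega)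
    exact ⟨(hcov k).choose⟩
  choose! t ht using fun W hW𝒲 => (hW W hW𝒲).1.exists_subset hcov
  have hT := isNoveltyChain_image_of_pairwiseDisjoint (fun W hW' => (hW W hW').1) hdisj ht
  obtain ⟨S, htS, hS, hSn⟩ :=
    hT.exists_superset_card_eq hcov hZ (n := n) (by nlinarith) (card_image_le.trans (by omega))
  have hUS : #(S.biUnion Z) ≤ (n + 1) * M :=
    hSn ▸ card_biUnion_le_card_mul _ _ _ fun i _ => hZ i
  have hW'card := card_add_card_compl (S.biUnion Z)
  have hW' : IsClump Z (S.biUnion Z)ᶜ :=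
    hS.isClump_compl_biUnion (hSn ▸ hcover) (card_pos.1 (by nlinarith))
  refine ⟨_, hW', by nlinarith, fun W hW𝒲 => disjoint_left.2 fun u huW' huW => ?_⟩
  have huS : ¬Z u ⊆ S.biUnion Z := fun h => by
    obtain ⟨k, hk⟩ := hW'.1
    exact mem_compl.1 hk (h ((mem_filter.1 huW').2 hk))
  have hu : u ∉ S := notMem_of_not_subset_biUnion huS
  have htW : t W ∈ S := htS (mem_image_of_mem t hW𝒲)
  have hcard : #(insert u S) = n + 2 := by rw [card_insert_of_notMem hu, hSn]
  have hle := card_add_card_le_of_biUnion_eq_univ hZ (hcover _ (hS.cons huS) hcard)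
    (mem_insert_self u S) (mem_insert_of_mem htW) (fun h => hu (h ▸ htW))
    (mem_filter.1 huW).2 (ht W hW𝒲)
  rw [hcard] at hle
  linarith [(hW W hW𝒲).2]

theorem exists_isClump_family (hcov : ∀ k, ∃ i, k ∈ Z i) (hZ : ∀ i, #(Z i) ≤ M)
    (hM : (2 * n + 3) * M < 2 * Fintype.card α)
    (hcover : ∀ S, IsNoveltyChain Z S → #S = n + 2 → S.biUnion Z = univ) {m : ℕ}
    (hm : m ≤ n + 2) :
    ∃ 𝒲 : Finset (Finset α), #𝒲 = m ∧
      (∀ W ∈ 𝒲, IsClump Z W ∧ (n + 2) * M < Fintype.card α + #W) ∧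
      (𝒲 : Set (Finset α)).PairwiseDisjoint (holders Z) := by
  induction m with
  | zero => exact ⟨∅, rfl, by simp, by simp⟩
  | succ m ih =>
    obtain ⟨𝒲, h𝒲, hW, hdisj⟩ := ih (by omega)
    obtain ⟨W', hW', hW'card, hW'disj⟩ :=
      exists_isClump_disjoint_holders hcov hZ hM hcover (by omega) hW hdisj
    have hW'𝒲 : W' ∉ 𝒲 := fun h => by
      obtain ⟨i, hi⟩ := hW'.exists_subset hcov
      exact disjoint_left.1 (hW'disj W' h) (mem_filter.2 ⟨mem_univ i, hi⟩)
        (mem_filter.2 ⟨mem_univ i, hi⟩)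
    refine ⟨insert W' 𝒲, by rw [card_insert_of_notMem hW'𝒲, h𝒲], ?_, ?_⟩
    · exact forall_mem_insert _ _ _ |>.2 ⟨⟨hW', hW'card⟩, hW⟩
    · rw [coe_insert]
      exact hdisj.insert fun W hW _ => hW'disj W hW

theorem exists_novelty_seq {M' : ℕ} (hZ : ∀ i, #(Z i) ≤ M)
    (hreg : ∀ k, M' ≤ #(univ.filter (k ∈ Z ·))) (hM' : 0 < M')
    (hM : (2 * n + 3) * M < 2 * Fintype.card α) (hN : Fintype.card ι < (n + 2) * M') :
    ∃ s : Fin (n + 3) → ι, Function.Injective s ∧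
      ∀ i, (Z (s i) \ (univ.filter (· < i)).biUnion (fun j => Z (s j))).Nonempty := by
  have hcov : ∀ k, ∃ i, k ∈ Z i := fun k => by
    simpa [Finset.Nonempty] using card_pos.1 (hM'.trans_le (hreg k))
  suffices ∃ S, IsNoveltyChain Z S ∧ #S = n + 3 by
    obtain ⟨S, hS, hSn⟩ := this
    obtain ⟨s, -, hs⟩ := hS.exists_seq hSn
    exact ⟨s, injective_of_forall_nonempty_sdiff hs, hs⟩
  by_contra! hno
  have hcover : ∀ S, IsNoveltyChain Z S → #S = n + 2 → S.biUnion Z = univ := by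
    intro S hS hSn
    by_contra hU
    obtain ⟨x, hxS, hx⟩ := hS.exists_insert hcov hU
    exact hno _ hx (by rw [card_insert_of_notMem hxS, hSn])
  obtain ⟨𝒲, h𝒲, hW, hdisj⟩ := exists_isClump_family hcov hZ hM hcover le_rfl
  have : (n + 2) * M' ≤ Fintype.card ι := calc
    (n + 2) * M' ≤ ∑ W ∈ 𝒲, #(holders Z W) := by
      rw [← h𝒲, ← smul_eq_mul]
      exact card_nsmul_le_sum _ _ _ fun W hW' => (hW W hW').1.le_card_holders hreg
    _ = #(𝒲.biUnion (holders Z)) := (card_biUnion hdisj).symm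
    _ ≤ Fintype.card ι := card_le_univ _
  omega

end Novelty

/-- Lemma 4 of the paper: when `N = (2a - 1 + a*b) * gcd(N, M')` with
`a = M'/gcd(N, M') ≥ 3`, every biregular assignment admits an ordered tuple of `b + 3`
distinct servers satisfying the novelty property. -/
theorem exists_novelty_chain_b_add_three (N K M M' b : ℕ) (hK : 1 ≤ K)
    (ha : 3 ≤ M' / Nat.gcd N M')
    (hN : N = (2 * (M' / Nat.gcd N M') - 1 + (M' / Nat.gcd N M') * b) * Nat.gcd N M')
    (hNM : N * M = K * M')
    (Z : Fin N → Finset (Fin K))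
    (hZcard : ∀ n, (Z n).card = M)
    (hreg : ∀ k : Fin K, (Finset.univ.filter (fun n => k ∈ Z n)).card = M') :
    ∃ s : Fin (b + 3) → Fin N, Function.Injective s ∧
      ∀ i, (Z (s i) \
        (Finset.univ.filter (fun j => j < i)).biUnion (fun j => Z (s j))).Nonempty := by
  set g := N.gcd M'
  set a := M' / g
  have hM' : 0 < M' := Nat.pos_of_ne_zero fun h => by simp [a, h] at ha
  have hg : 0 < g := Nat.gcd_pos_of_pos_right N hM'
  have hag : a * g = M' := Nat.div_mul_cancel (Nat.gcd_dvd_right N M')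
  obtain ⟨a', ha'⟩ : ∃ a', a = a' + 3 := ⟨a - 3, by omega⟩
  have hN' : N = (2 * a' + 5 + (a' + 3) * b) * g := by
    rw [hN, ha', show 2 * (a' + 3) - 1 = 2 * a' + 5 by omega]
  have hKM : (2 * a' + 5 + (a' + 3) * b) * M = K * (a' + 3) := by
    refine Nat.eq_of_mul_eq_mul_right hg ?_
    rw [← hag, ha', hN'] at hNM
    linarith
  have hM : 0 < M := by nlinarith
  refine Novelty.exists_novelty_seq (M := M) (M' := M') (fun i => (hZcard i).le)
    (fun k => (hreg k).ge) hM' ?_ ?_ <;> simp only [Fintype.card_fin]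
  · nlinarith
  · rw [← hag, ha', hN']; nlinarith
end

section
/- Let F be a field, V an F-vector space (or F-module), and λ, k, K, r natural numbers with k ≤ λ. Let F₁ be a k × K matrix, F₂ a (λ−k) × K matrix, and S' a (λ−k) × (λ−k) matrix over F, and let F' be the λ × (K + λ − k) block matrix [F₁ 0; F₂ S'] (first k rows [F₁ | 0], last λ−k rows [F₂ | S']). Suppose D is a k × r matrix and S_A an r × λ matrix over F with D * S_A = [I_k | 0_{k×(λ−k)}]. Then for every w : Fin K → V and q : Fin (λ−k) → V, D ⬝ (S_A ⬝ (F' ⬝ (w ⊞ q))) = F₁ ⬝ w, where w ⊞ q denotes the concatenated vector in Fin (K + λ − k) → V and A ⬝ v denotes the vector i ↦ ∑_j A i j • v j. -/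
/-!
The decoder `D` and the servers' matrix `S_A` compose to the projection `[I_k | 0]` onto the
first `k` coordinates, and the first `k` rows of `F' = [F₁ 0; F₂ S']` are `[F₁ | 0]`. Hence the
composite `D * S_A * F'` equals `[F₁ | 0]`, which sees the messages `w` only and ignores the
keys `q`.
-/

/-- The action of a matrix `A` over `F` on a vector `v` with entries in an `F`-module:
`(A ⬝ v) i = ∑ j, A i j • v j`. -/
def matVecSMul {F V : Type*} [Semiring F] [AddCommMonoid V] [Module F V]
    {m n : Type*} [Fintype n] (A : Matrix m n F) (v : n → V) : m → V :=
  fun i => ∑ j, A i j • v j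

section MatVecSMul

variable {R V : Type*} [Semiring R] [AddCommMonoid V] [Module R V]
  {m n p : Type*} [Fintype n] [Fintype p]

lemma matVecSMul_mul (A : Matrix m n R) (B : Matrix n p R) (v : p → V) :
    matVecSMul (A * B) v = matVecSMul A (matVecSMul B v) := by
  funext i
  simp only [matVecSMul, Matrix.mul_apply, Finset.sum_smul, Finset.smul_sum, smul_smul]
  exact Finset.sum_comm

@[simp]
lemma matVecSMul_zero_left (v : n → V) : matVecSMul (0 : Matrix m n R) v = 0 := by
  funext i
  simp [matVecSMul]

lemma matVecSMul_fromCols_sumElim (A : Matrix m n R) (B : Matrix m p R)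
    (v : n → V) (u : p → V) :
    matVecSMul (Matrix.fromCols A B) (Sum.elim v u) = matVecSMul A v + matVecSMul B u := by
  funext i
  simp [matVecSMul, Matrix.fromCols, Fintype.sum_sum_type]

end MatVecSMul

lemma Matrix.fromCols_one_zero_mul_fromBlocks {R : Type*} [Semiring R]
    {m n₂ l₁ l₂ : Type*} [Fintype m] [DecidableEq m] [Fintype n₂]
    (A : Matrix m l₁ R) (B : Matrix m l₂ R) (C : Matrix n₂ l₁ R) (E : Matrix n₂ l₂ R) :
    Matrix.fromCols (1 : Matrix m m R) (0 : Matrix m n₂ R) * Matrix.fromBlocks A B C E =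
      Matrix.fromCols A B := by
  simp [Matrix.fromCols_mul_fromBlocks]

theorem secure_scheme_decodable_general {F : Type*} [Field F]
    {V : Type*} [AddCommGroup V] [Module F V]
    (lam k K r : ℕ)
    (F1 : Matrix (Fin k) (Fin K) F) (F2 : Matrix (Fin (lam - k)) (Fin K) F)
    (S' : Matrix (Fin (lam - k)) (Fin (lam - k)) F)
    (D : Matrix (Fin k) (Fin r) F)
    (SA : Matrix (Fin r) (Fin k ⊕ Fin (lam - k)) F)
    (hDS : D * SA =
      Matrix.fromCols (1 : Matrix (Fin k) (Fin k) F)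
        (0 : Matrix (Fin k) (Fin (lam - k)) F)) :
    ∀ (w : Fin K → V) (q : Fin (lam - k) → V),
      matVecSMul D
        (matVecSMul SA (matVecSMul (Matrix.fromBlocks F1 0 F2 S') (Sum.elim w q))) =
      matVecSMul F1 w := by
  intro w q
  calc matVecSMul D
        (matVecSMul SA (matVecSMul (Matrix.fromBlocks F1 0 F2 S') (Sum.elim w q)))
      = matVecSMul (D * SA * Matrix.fromBlocks F1 0 F2 S') (Sum.elim w q) := by
        rw [matVecSMul_mul, matVecSMul_mul]
    _ = matVecSMul (Matrix.fromCols F1 (0 : Matrix (Fin k) (Fin (lam - k)) F))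
          (Sum.elim w q) := by
        rw [hDS, Matrix.fromCols_one_zero_mul_fromBlocks]
    _ = matVecSMul F1 w := by
        rw [matVecSMul_fromCols_sumElim, matVecSMul_zero_left, add_zero]

/-- Decodability core of Theorem 2: if `D * S_A = [I_k | 0]` then applying
`D` to the responding servers' answers in the secured scheme, whose encoding matrix is the
block matrix `F' = [F₁ 0; F₂ S']` applied to the concatenation of messages `w` and keys `q`,
recovers exactly `F₁ ⬝ w`, regardless of the keys. -/
theorem secure_scheme_decodable {F : Type*} [Field F]
    {V : Type*} [AddCommGroup V] [Module F V]
    (lam k K r : ℕ) (hk : k ≤ lam)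
    (F1 : Matrix (Fin k) (Fin K) F) (F2 : Matrix (Fin (lam - k)) (Fin K) F)
    (S' : Matrix (Fin (lam - k)) (Fin (lam - k)) F)
    (D : Matrix (Fin k) (Fin r) F)
    (SA : Matrix (Fin r) (Fin k ⊕ Fin (lam - k)) F)
    (hDS : D * SA =
      Matrix.fromCols (1 : Matrix (Fin k) (Fin k) F)
        (0 : Matrix (Fin k) (Fin (lam - k)) F)) :
    ∀ (w : Fin K → V) (q : Fin (lam - k) → V),
      matVecSMul D
        (matVecSMul SA (matVecSMul (Matrix.fromBlocks F1 0 F2 S') (Sum.elim w q))) =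
      matVecSMul F1 w :=
  secure_scheme_decodable_general lam k K r F1 F2 S' D SA hDS
end

section
/- Let M and y be natural numbers with M odd and 2 * y + 1 ≤ M, and set N := 2 * M − y. Define I₀ := Finset.Icc 1 y, I₁ := Finset.Icc (y+1) M, I₂ := Finset.Icc (M+1) N. Let A ⊆ Finset.Icc 1 N with A.card = M − y + 1. Then at least one of the following holds: (a) 2 * (A ∩ I₁).card ≥ M + 3 − 2*y; (b) 2 * (A ∩ I₂).card ≥ M + 3 − 2*y; (c) I₀ ⊆ A, 2 * (A ∩ I₁).card = M + 1 − 2*y, and 2 * (A ∩ I₂).card = M + 1 − 2*y. -/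
open Finset

theorem card_eq_card_inter_add_card_inter_add_card_inter {α : Type*} [DecidableEq α]
    {s t₁ t₂ t₃ : Finset α} (hs : s ⊆ t₁ ∪ t₂ ∪ t₃) (h₁₂ : Disjoint t₁ t₂)
    (h₁₃ : Disjoint t₁ t₃) (h₂₃ : Disjoint t₂ t₃) :
    #s = #(s ∩ t₁) + #(s ∩ t₂) + #(s ∩ t₃) := by
  conv_lhs => rw [← inter_eq_left.2 hs, inter_union_distrib_left, inter_union_distrib_left]
  rw [card_union_of_disjoint, card_union_of_disjoint]
  · exact h₁₂.mono inter_subset_right inter_subset_right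
  · exact disjoint_union_left.2
      ⟨h₁₃.mono inter_subset_right inter_subset_right,
        h₂₃.mono inter_subset_right inter_subset_right⟩

theorem card_eq_add_card_inter_Icc_of_subset_Icc {s : Finset ℕ} {a b c d : ℕ} (hbc : b ≤ c)
    (hs : s ⊆ Icc a d) :
    #s = #(s ∩ Icc a b) + #(s ∩ Icc (b + 1) c) + #(s ∩ Icc (c + 1) d) := by
  refine card_eq_card_inter_add_card_inter_add_card_inter (hs.trans fun x hx => ?_)
    (disjoint_left.2 fun x h h' => ?_) (disjoint_left.2 fun x h h' => ?_)
    (disjoint_left.2 fun x h h' => ?_) <;>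
  simp only [mem_union, mem_Icc] at * <;> omega

theorem subset_of_card_le_card_inter {α : Type*} [DecidableEq α] {s t : Finset α}
    (h : #t ≤ #(s ∩ t)) : t ⊆ s :=
  inter_eq_right.1 (eq_of_subset_of_card_le inter_subset_right h)

/-- Case analysis for the decoding phase of Scheme 4 (with `N = 2M - y`,
`N_r = M - y + 1`): any set `A` of `M - y + 1` responding servers among `[1, N]` contains
at least `(M+3)/2 - y` servers in `[y+1, M]`, or at least `(M+3)/2 - y` servers in
`[M+1, N]`, or it contains all of `[1, y]` and exactly `(M+1)/2 - y` servers in each of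
`[y+1, M]` and `[M+1, N]`. -/
theorem scheme4_decoding_cases (M y : ℕ) (hodd : Odd M) (hy : 2 * y + 1 ≤ M)
    (A : Finset ℕ) (hA : A ⊆ Finset.Icc 1 (2 * M - y)) (hcard : A.card = M - y + 1) :
    2 * (A ∩ Finset.Icc (y + 1) M).card ≥ M + 3 - 2 * y ∨
    2 * (A ∩ Finset.Icc (M + 1) (2 * M - y)).card ≥ M + 3 - 2 * y ∨
    (Finset.Icc 1 y ⊆ A ∧
      2 * (A ∩ Finset.Icc (y + 1) M).card = M + 1 - 2 * y ∧
      2 * (A ∩ Finset.Icc (M + 1) (2 * M - y)).card = M + 1 - 2 * y) := by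
  have hsplit := card_eq_add_card_inter_Icc_of_subset_Icc (by omega : y ≤ M) hA
  have hfirst : #(A ∩ Icc 1 y) ≤ y := by
    simpa using card_le_card (inter_subset_right (s₁ := A) (s₂ := Icc 1 y))
  obtain ⟨k, rfl⟩ := hodd
  refine or_iff_not_imp_left.2 fun hmid => or_iff_not_imp_left.2 fun hlast => ?_
  -- `M + 3 - 2 * y` is even, so each of the two groups holds at most `(M + 1) / 2 - y` servers,
  -- leaving at least `y` of the `M - y + 1` servers of `A` in `[1, y]`.
  have hall : #(A ∩ Icc 1 y) = y := by omega
  exact ⟨subset_of_card_le_card_inter (by simpa using hall.ge), by omega, by omega⟩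
end

section
/- Define h : ℕ → ℕ → ℕ on pairs (N, M) with 1 ≤ M ≤ N by the following recursion (well-founded since the first argument strictly decreases in every recursive call): letting g := Nat.gcd N M, (i) if g > 1 then h(N, M) = h(N/g, M/g); otherwise (g = 1): (ii) if M = 1 then h(N, M) = N; (iii) else if N ≥ 2*M then h(N, M) = h(N − (N/M − 1)*M, M) + (N/M − 1) (floor division); (iv) else if 2*N ≥ 3*M and M is even then h(N, M) = h(N − M, M/2) + 1; (v) else if 2*N ≥ 3*M and M is odd then h(N, M) = N − (3*M − 5)/2; (vi) else (M < N < 1.5*M) h(N, M) = h(M, 2*M − N). Then for all N, M with 1 ≤ M ≤ N, one has h(N, M) ≤ N − M + 1. -/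
/-- The number `h(N, M)` of totally transmitted linearly independent combinations in the
combined scheme of Theorem 6, defined by the recursion of Fig. 2 on pairs `(N, M)` with
`1 ≤ M ≤ N` (outside this domain the value is irrelevant and set to `0`; within the
domain the guard never fires on recursive calls). -/
def combinedSchemeH (N M : ℕ) : ℕ :=
  if hdom : M = 0 ∨ N < M then 0
  else if hg : 1 < Nat.gcd N M then
    combinedSchemeH (N / Nat.gcd N M) (M / Nat.gcd N M)
  else if hm1 : M = 1 then N
  else if h2 : 2 * M ≤ N then
    combinedSchemeH (N - (N / M - 1) * M) M + (N / M - 1)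
  else if h3 : 3 * M ≤ 2 * N ∧ Even M then
    combinedSchemeH (N - M) (M / 2) + 1
  else if h4 : 3 * M ≤ 2 * N ∧ Odd M then
    N - (3 * M - 5) / 2
  else
    combinedSchemeH M (2 * M - N)
termination_by N
decreasing_by
  · exact Nat.div_lt_self (by omega) hg
  · have hq : 2 ≤ N / M := (Nat.le_div_iff_mul_le (by omega : 0 < M)).2 (by omega)
    have hpos : 0 < (N / M - 1) * M := Nat.mul_pos (by omega) (by omega)
    omega
  · omega
  · have hgcd1 : Nat.gcd N M = 1 := by
      have hpos : 0 < Nat.gcd N M := Nat.gcd_pos_of_pos_right N (by omega)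
      omega
    have hne : N ≠ M := by
      intro he
      rw [he, Nat.gcd_self] at hgcd1
      omega
    omega

/-! Strong induction on `N`: every recursive step of `h` lowers the potential `N - M + 1`
by at least what it adds to `h`. Dividing by `g = gcd N M` divides `N - M` by `g`; removing
`q - 1` copies of `M` (with `q = N / M`) lowers it by `(q - 1) * M ≥ q - 1`; halving an even
`M` while removing `M` lowers it by `M / 2 ≥ 1`; the reflection `(N, M) ↦ (M, 2M - N)`
preserves it; and for odd `M ≥ 3`, `(3M - 5) / 2 ≥ M - 1` closes the base case. -/

namespace Nat

theorem div_sub_div_le_sub_of_dvd {d M : ℕ} (N : ℕ) (h : d ∣ M) : N / d - M / d ≤ N - M := by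
  obtain ⟨b, rfl⟩ := h
  rcases Nat.eq_zero_or_pos d with rfl | hd
  · simp
  rw [Nat.mul_div_cancel_left b hd, ← Nat.sub_mul_div]
  exact Nat.div_le_self _ _

theorem sub_pred_div_mul_eq_add_mod {M N : ℕ} (hM : 0 < M) (hMN : M ≤ N) :
    N - (N / M - 1) * M = M + N % M := by
  have hq : 1 ≤ N / M := (Nat.one_le_div_iff hM).2 hMN
  have := Nat.div_add_mod' N M
  rw [Nat.sub_one_mul]
  have : M ≤ N / M * M := Nat.le_mul_of_pos_left M hq
  omega

theorem mod_add_pred_div_le_sub {M N : ℕ} (hM : 0 < M) (hMN : M ≤ N) :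
    N % M + (N / M - 1) ≤ N - M := by
  have := Nat.le_mul_of_pos_right (N / M - 1) hM
  have := Nat.sub_pred_div_mul_eq_add_mod hM hMN
  omega

end Nat

/-- The randomness count of the combined scheme never exceeds that of the
cyclic-assignment scheme: `h(N, M) ≤ N - M + 1` for all `1 ≤ M ≤ N`. -/
theorem combinedSchemeH_le (N M : ℕ) (hM : 1 ≤ M) (hMN : M ≤ N) :
    combinedSchemeH N M ≤ N - M + 1 := by
  induction N using Nat.strong_induction_on generalizing M with
  | _ N ih =>
  rw [combinedSchemeH]
  split_ifs with hdom hg hm1 h2 h3 h4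
  · omega
  · have hgM : Nat.gcd N M ≤ M := Nat.gcd_le_right N hM
    have := ih _ (Nat.div_lt_self (by omega) hg) (M / Nat.gcd N M)
      (Nat.div_pos hgM (by omega)) (Nat.div_le_div_right hMN)
    have := Nat.div_sub_div_le_sub_of_dvd N (Nat.gcd_dvd_right N M)
    omega
  · omega
  · rw [Nat.sub_pred_div_mul_eq_add_mod hM hMN]
    have := Nat.mod_lt N hM
    have := ih (M + N % M) (by omega) M hM (by omega)
    have := Nat.mod_add_pred_div_le_sub hM hMN
    omega
  · obtain ⟨h32, k, rfl⟩ := h3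
    have := ih (N - (k + k)) (by omega) ((k + k) / 2) (by omega) (by omega)
    omega
  · obtain ⟨-, k, rfl⟩ := h4
    omega
  · have hNM : M ≠ N := by
      rintro rfl
      rw [Nat.gcd_self] at hg
      omega
    have h2N : 2 * N < 3 * M := by
      by_contra! h
      exact (Nat.even_or_odd M).elim (h3 ⟨h, ·⟩) (h4 ⟨h, ·⟩)
    have := ih M (by omega) (2 * M - N) (by omega) (by omega)
    omega
end

section
/- Define h : ℕ → ℕ → ℕ on pairs (N, M) with 1 ≤ M ≤ N by the following recursion: letting g := Nat.gcd N M, (i) if g > 1 then h(N, M) = h(N/g, M/g); otherwise (g = 1): (ii) if M = 1 then h(N, M) = N; (iii) else if N ≥ 2*M then h(N, M) = h(N − (N/M − 1)*M, M) + (N/M − 1) (floor division); (iv) else if 2*N ≥ 3*M and M is even then h(N, M) = h(N − M, M/2) + 1; (v) else if 2*N ≥ 3*M and M is odd then h(N, M) = N − (3*M − 5)/2; (vi) else (M < N < 1.5*M) h(N, M) = h(M, 2*M − N). Then for all N, M with 1 ≤ M ≤ N and M / Nat.gcd N M ≤ 4, one has: h(N, M) = ⌈N/M⌉ + 1 if M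 / Nat.gcd N M ≥ 3 and (N / Nat.gcd N M) mod (M / Nat.gcd N M) = M / Nat.gcd N M − 1, and h(N, M) = ⌈N/M⌉ otherwise, where ⌈N/M⌉ = (N + M − 1)/M. -/
/-! The reduction steps (i) and (iii) bring every pair with `M / gcd(N, M) ≤ 4` to a coprime pair
`(M + r, M)` with `r < M ≤ 4`. There are only six of these, and a direct evaluation gives
`h = 3` when `r = M - 1 ≥ 2` and `h = 2` otherwise. Step (iii) adds `⌊N/M⌋ - 1 = ⌈N/M⌉ - 2`
along the way, and `⌈N/M⌉` is unchanged by dividing `N` and `M` by their gcd. -/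

theorem combinedSchemeH_div_gcd {N M : ℕ} (hM : 1 ≤ M) (hMN : M ≤ N) :
    combinedSchemeH N M = combinedSchemeH (N / N.gcd M) (M / N.gcd M) := by
  by_cases hg : 1 < N.gcd M
  · rw [combinedSchemeH, dif_neg (by omega), dif_pos hg]
  · have hg1 : N.gcd M = 1 := by
      have := Nat.gcd_pos_of_pos_right N hM
      omega
    rw [hg1, Nat.div_one, Nat.div_one]

theorem combinedSchemeH_one_right {N : ℕ} (hN : 1 ≤ N) : combinedSchemeH N 1 = N := by
  rw [combinedSchemeH, dif_neg (by omega), dif_neg (by simp), dif_pos rfl]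

theorem combinedSchemeH_eq_add_mod {N M : ℕ} (hcop : N.Coprime M) (hM : 2 ≤ M) (hMN : M ≤ N) :
    combinedSchemeH N M = combinedSchemeH (M + N % M) M + (N / M - 1) := by
  have hdiv := Nat.div_add_mod' N M
  by_cases h2 : 2 * M ≤ N
  · have hq : 2 ≤ N / M := (Nat.le_div_iff_mul_le (by omega)).2 (by omega)
    have hqM : M ≤ N / M * M := Nat.le_mul_of_pos_left M (by omega)
    have hreduce : N - (N / M - 1) * M = M + N % M := by
      rw [Nat.sub_one_mul]
      omega
    rw [combinedSchemeH, dif_neg (by omega), dif_neg (by rw [hcop]; omega), dif_neg (by omega),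
      dif_pos h2, hreduce]
  · have hq : N / M = 1 := Nat.div_eq_of_lt_le (by omega) (by omega)
    rw [hq, one_mul] at hdiv
    rw [hq, Nat.sub_self, add_zero, hdiv]

theorem combinedSchemeH_add_mod_of_le_four {M r : ℕ} (hM : 2 ≤ M) (hM4 : M ≤ 4) (hr : r < M)
    (hcop : r.Coprime M) :
    combinedSchemeH (M + r) M = if 3 ≤ M ∧ r = M - 1 then 3 else 2 := by
  interval_cases M <;> interval_cases r <;> simp_all [combinedSchemeH, Nat.even_iff, Nat.odd_iff]

theorem combinedSchemeH_of_coprime_of_le_four {N M : ℕ} (hcop : N.Coprime M) (hM : 1 ≤ M)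
    (hMN : M ≤ N) (hM4 : M ≤ 4) :
    combinedSchemeH N M =
      if 3 ≤ M ∧ N % M = M - 1 then (N + M - 1) / M + 1 else (N + M - 1) / M := by
  obtain rfl | hM2 : M = 1 ∨ 2 ≤ M := by omega
  · rw [combinedSchemeH_one_right hMN]
    simp
  · have hrem : N % M ≠ 0 := fun h => by
      have := hcop.symm.eq_one_of_dvd (Nat.dvd_of_mod_eq_zero h)
      omega
    rw [combinedSchemeH_eq_add_mod hcop hM2 hMN, combinedSchemeH_add_mod_of_le_four hM2 hM4
      (Nat.mod_lt N (by omega)) ((ZMod.coprime_mod_iff_coprime N M).2 hcop)]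
    interval_cases M <;> split_ifs <;> omega

theorem Nat.ceilDiv_mul_mul_left {g a b : ℕ} (hg : 0 < g) (hb : 0 < b) :
    (g * a) ⌈/⌉ (g * b) = a ⌈/⌉ b :=
  eq_of_forall_ge_iff fun c => by
    rw [ceilDiv_le_iff_le_smul (Nat.mul_pos hg hb), ceilDiv_le_iff_le_smul hb, smul_eq_mul,
      smul_eq_mul, mul_assoc, Nat.mul_le_mul_left_iff hg]

/-- Evaluation of `h(N, M)` when `M / gcd(N, M) ≤ 4` (Theorem 7):
`h(N, M) = ⌈N/M⌉ + 1` if `M/gcd ≥ 3` and `(N/gcd) mod (M/gcd) = M/gcd - 1`, and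
`h(N, M) = ⌈N/M⌉` otherwise, where `⌈N/M⌉ = (N + M - 1)/M`. -/
theorem combinedSchemeH_eval (N M : ℕ) (hM : 1 ≤ M) (hMN : M ≤ N)
    (h4 : M / Nat.gcd N M ≤ 4) :
    combinedSchemeH N M =
      if 3 ≤ M / Nat.gcd N M ∧
          (N / Nat.gcd N M) % (M / Nat.gcd N M) = M / Nat.gcd N M - 1
      then (N + M - 1) / M + 1
      else (N + M - 1) / M := by
  set g := N.gcd M
  have hg : 0 < g := Nat.gcd_pos_of_pos_right N hM
  have hM' : 1 ≤ M / g := Nat.div_pos (Nat.le_of_dvd hM (Nat.gcd_dvd_right N M)) hg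
  have hceil : (N + M - 1) / M = (N / g + M / g - 1) / (M / g) := by
    have hgN : g ∣ N := Nat.gcd_dvd_left N M
    have hgM : g ∣ M := Nat.gcd_dvd_right N M
    have := Nat.ceilDiv_mul_mul_left (a := N / g) hg hM'
    rwa [Nat.mul_div_cancel' hgN, Nat.mul_div_cancel' hgM] at this
  rw [combinedSchemeH_div_gcd hM hMN, hceil,
    combinedSchemeH_of_coprime_of_le_four (Nat.coprime_div_gcd_div_gcd hg) hM'
      (Nat.div_le_div_right hMN) h4]
end
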